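/- For every positive integer k, the k×k complex matrix u_k with entries (u_k)_{p,q} = √(2/(k+1)) · ι^p · sin(π p q/(k+1)) for p, q ∈ {1, …, k} (where ι = √(-1)) is unitary, i.e., u_k multiplied by its conjugate transpose equals the k×k identity matrix. -/

import Mathlib

/-!
Write `u_k = D S`, where `D = diag(ι, ι², …, ιᵏ)` is unitary and `S` is the real matrix
`√(2/(k+1)) sin(π p q/(k+1))` of the discrete sine transform, so it suffices that `S Sᵀ = 1`.
With `n = k + 1`, the product-to-sum formula turns `∑ᵣ sin(π a r/n) sin(π b r/n)` into a
difference of two sums `∑_{r<n} cos(π m r/n)` with `m = a ∓ b`. For `0 < m < 2n` such a sum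
equals `sin(π m/2)²`, and `sin(π(a+b)/2)² = sin(π(a-b)/2)²` because the two angles differ by `π b`;
so the difference vanishes for `a ≠ b`, while for `a = b` it is `n - sin(π a)² = n`.
-/

/-- The `k × k` matrix `u_k` with `(p,q)` entry `√(2/(k+1)) ιᵖ sin(π p q/(k+1))`,
for `p, q ∈ {1, …, k}` (here indexed by `Fin k`, so `p` corresponds to `(p : ℕ) + 1`). -/
noncomputable def umat (k : ℕ) : Matrix (Fin k) (Fin k) ℂ :=
  Matrix.of fun p q =>
    (Real.sqrt (2 / ((k : ℝ) + 1)) : ℂ) * Complex.I ^ ((p : ℕ) + 1) *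
      ((Real.sin (Real.pi * ((p : ℕ) + 1) * ((q : ℕ) + 1) / ((k : ℝ) + 1)) : ℝ) : ℂ)

open Real Finset
open scoped Matrix

theorem sum_range_cos_pi_mul_div {n m : ℕ} (hm : 0 < m) (hmn : m < 2 * n) :
    ∑ r ∈ range n, cos (π * m * r / n) = sin (π * m / 2) ^ 2 := by
  have hn : (0 : ℝ) < n := by exact_mod_cast (by omega : 0 < n)
  have hsin : sin (π * m / n / 2) ≠ 0 := by
    refine (sin_pos_of_pos_of_lt_pi (by positivity) ?_).ne'
    rw [div_div, div_lt_iff₀ (by positivity)]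
    have : (m : ℝ) < n * 2 := by exact_mod_cast (by omega : m < n * 2)
    nlinarith [pi_pos]
  -- Lagrange's formula gives `sin(θ/2) ∑ cos(rθ) = sin(π m/2) cos(π m/2 - θ/2)` for `θ = π m/n`,
  -- and the cross term `sin(π m/2) cos(π m/2)` vanishes since `sin(π m) = 0`.
  apply mul_left_cancel₀ hsin
  have h := sin_mul_sum_cos n (π * m / n) 0
  simp only [add_zero] at h
  calc sin (π * m / n / 2) * ∑ r ∈ range n, cos (π * m * r / n)
      = sin (n * (π * m / n) / 2) * cos ((n - 1) * (π * m / n) / 2) := by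
        rw [← h]; congr 1; refine sum_congr rfl fun r _ => ?_; ring_nf
    _ = sin (π * m / 2) * cos (π * m / 2 - π * m / n / 2) := by
        congr 2 <;> field_simp
    _ = sin (π * m / n / 2) * sin (π * m / 2) ^ 2 := by
        have h2 : 2 * sin (π * m / 2) * cos (π * m / 2) = 0 := by
          rw [← sin_two_mul, show 2 * (π * m / 2) = m * π by ring, sin_nat_mul_pi]
        rw [cos_sub]
        linear_combination cos (π * m / n / 2) / 2 * h2

theorem sum_range_sin_mul_sin {n a b : ℕ} (ha : 0 < a) (han : a < n) (hb : 0 < b) (hbn : b < n) :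
    ∑ r ∈ range n, sin (π * a * r / n) * sin (π * b * r / n) = if a = b then (n / 2 : ℝ) else 0 := by
  wlog hba : b ≤ a generalizing a b
  · convert this hb hbn ha han (by omega) using 1
    · exact sum_congr rfl fun r _ => mul_comm _ _
    · exact if_congr eq_comm rfl rfl
  have product_to_sum : ∀ r : ℕ, sin (π * a * r / n) * sin (π * b * r / n)
      = (cos (π * ↑(a - b) * r / n) - cos (π * ↑(a + b) * r / n)) / 2 := by
    intro r
    rw [Nat.cast_sub hba, Nat.cast_add,
      show π * (a - b) * r / n = π * a * r / n - π * b * r / n by ring,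
      show π * (a + b) * r / n = π * a * r / n + π * b * r / n by ring, cos_sub, cos_add]
    ring
  rw [sum_congr rfl fun r _ => product_to_sum r, ← sum_div, sum_sub_distrib,
    sum_range_cos_pi_mul_div (m := a + b) (by omega) (by omega)]
  rcases hba.eq_or_lt with rfl | hlt
  · simp only [Nat.sub_self, CharP.cast_eq_zero, mul_zero, zero_mul, zero_div, cos_zero,
      sum_const, card_range, nsmul_eq_mul, mul_one, if_true]
    rw [Nat.cast_add, show π * (b + b) / 2 = b * π by ring, sin_nat_mul_pi]
    ring
  · rw [if_neg hlt.ne', sum_range_cos_pi_mul_div (by omega) (by omega), Nat.cast_sub hba,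
      Nat.cast_add, show π * (a + b) / 2 = π * (a - b) / 2 + b * π by ring, sin_add_nat_mul_pi,
      mul_pow, ← pow_mul, Even.neg_one_pow ⟨b, by ring⟩]
    ring

noncomputable def sineTransformMatrix (k : ℕ) : Matrix (Fin k) (Fin k) ℝ :=
  Matrix.of fun p q =>
    √(2 / ((k : ℝ) + 1)) * sin (π * ((p : ℕ) + 1) * ((q : ℕ) + 1) / ((k : ℝ) + 1))

theorem sineTransformMatrix_mul_transpose (k : ℕ) :
    sineTransformMatrix k * (sineTransformMatrix k)ᵀ = 1 := by
  ext p q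
  have orth := sum_range_sin_mul_sin (n := k + 1) (a := p + 1) (b := q + 1)
    (by omega) (by omega) (by omega) (by omega)
  rw [sum_range, Fin.sum_univ_succ] at orth
  simp only [Fin.val_zero, Fin.val_succ, Nat.cast_add, Nat.cast_one, Nat.cast_zero, mul_zero,
    zero_div, sin_zero, zero_add, add_left_inj, Fin.val_inj] at orth
  have hc : √(2 / ((k : ℝ) + 1)) * √(2 / ((k : ℝ) + 1)) = 2 / (k + 1) :=
    mul_self_sqrt (by positivity)
  simp only [Matrix.mul_apply, Matrix.transpose_apply, Matrix.of_apply, sineTransformMatrix]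
  calc _ = 2 / ((k : ℝ) + 1) * ∑ r : Fin k,
        sin (π * (p + 1) * (r + 1) / (k + 1)) * sin (π * (q + 1) * (r + 1) / (k + 1)) := by
        rw [mul_sum]; exact sum_congr rfl fun r _ => by rw [mul_mul_mul_comm, hc]
    _ = (1 : Matrix (Fin k) (Fin k) ℝ) p q := by
        rw [orth, Matrix.one_apply]; split_ifs
        · field_simp
        · rw [mul_zero]

theorem umat_eq_diagonal_mul_map (k : ℕ) :
    umat k = Matrix.diagonal (fun p : Fin k => Complex.I ^ ((p : ℕ) + 1)) *
      (sineTransformMatrix k).map Complex.ofRealHom := by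
  ext p q
  simp only [umat, sineTransformMatrix, Matrix.diagonal_mul, Matrix.map_apply, Matrix.of_apply,
    Complex.ofRealHom_eq_coe, Complex.ofReal_mul]
  ring

theorem map_ofReal_mul_conjTranspose_eq_one {n : Type*} [Fintype n] [DecidableEq n]
    {A : Matrix n n ℝ} (hA : A * Aᵀ = 1) :
    A.map Complex.ofRealHom * (A.map Complex.ofRealHom)ᴴ = 1 := by
  rw [← Matrix.conjTranspose_map (⇑Complex.ofRealHom) fun x => (Complex.conj_ofReal x).symm,
    Matrix.conjTranspose_eq_transpose_of_trivial, ← Matrix.map_mul, hA,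
    Matrix.map_one _ (map_zero _) (map_one _)]

theorem umat_mul_conjTranspose (k : ℕ) :
    umat k * (umat k).conjTranspose = 1 := by
  have hD : Matrix.diagonal (fun p : Fin k => Complex.I ^ ((p : ℕ) + 1)) *
      (Matrix.diagonal fun p : Fin k => Complex.I ^ ((p : ℕ) + 1))ᴴ = 1 := by
    rw [Matrix.diagonal_conjTranspose, Matrix.diagonal_mul_diagonal, ← Matrix.diagonal_one]
    congr 1
    funext p
    simp [← mul_pow]
  rw [umat_eq_diagonal_mul_map, Matrix.conjTranspose_mul, Matrix.mul_assoc,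
    ← Matrix.mul_assoc (Matrix.map _ _),
    map_ofReal_mul_conjTranspose_eq_one (sineTransformMatrix_mul_transpose k), Matrix.one_mul, hD]
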